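/- Let θ, θ* ∈ ℝ^{N×m} with columns θ_j, θ_j*, Y ∈ ℝ^{N×m} with columns y_j, f_j : ℝ^N → ℝ convex continuously differentiable, Γ symmetric positive definite, and f_j(θ_j*) ≤ 0 for all j. Then Tr[(θ - θ*)ᵀ Γ⁻¹ (Proj_Γ(θ, Y, F) - ΓY)] ≤ 0, where Proj_Γ is applied columnwise. -/

import Mathlib

/-!
On a column where the correction is active it equals `-c • Γ ∇f_j(θ_j)` with
`c = f_j(θ_j) ⟪∇f_j(θ_j), Γ y_j⟫ / ⟪∇f_j(θ_j), Γ ∇f_j(θ_j)⟫ ≥ 0`, because Γ is symmetric positive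
definite and the activation condition makes the numerator positive. After applying `Γ⁻¹`, its
pairing with `θ_j - θ_j*` is `-c ⟪θ_j - θ_j*, ∇f_j(θ_j)⟫`, and the gradient inequality for the
convex `f_j` gives `⟪∇f_j(θ_j), θ_j - θ_j*⟫ ≥ f_j(θ_j) - f_j(θ_j*) > 0`. Inactive columns
contribute zero.
-/

open RealInnerProductSpace

section GradientInequality

variable {E : Type*} [NormedAddCommGroup E] [InnerProductSpace ℝ E] [CompleteSpace E]
  {f : E → ℝ} {x : E}

theorem ConvexOn.inner_gradient_sub_le (hf : ConvexOn ℝ Set.univ f)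
    (hx : DifferentiableAt ℝ f x) (y : E) : ⟪gradient f x, y - x⟫ ≤ f y - f x := by
  set ℓ : ℝ →ᵃ[ℝ] E := AffineMap.lineMap x y
  have hderiv : HasDerivAt (f ∘ ℓ) ⟪gradient f x, y - x⟫ 0 := by
    have hfx : HasFDerivAt f (InnerProductSpace.toDual ℝ E (gradient f x)) (ℓ 0) := by
      simpa [ℓ] using hx.hasGradientAt.hasFDerivAt
    exact hfx.comp_hasDerivAt (0 : ℝ) AffineMap.hasDerivAt_lineMap
  have hconv : ConvexOn ℝ Set.univ (f ∘ ℓ) := by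
    simpa using hf.comp_affineMap ℓ
  simpa [ℓ, slope_def_field] using
    hconv.le_slope_of_hasDerivAt (Set.mem_univ 0) (Set.mem_univ 1) zero_lt_one hderiv

theorem ConvexOn.inner_sub_gradient_nonneg (hf : ConvexOn ℝ Set.univ f)
    (hx : DifferentiableAt ℝ f x) {y : E} (hyx : f y ≤ f x) : 0 ≤ ⟪x - y, gradient f x⟫ := by
  have := hf.inner_gradient_sub_le hx y
  rw [real_inner_comm, ← neg_sub, inner_neg_left] at this
  linarith

end GradientInequality

theorem Matrix.toEuclideanLin_inv_apply_toEuclideanLin {𝕜 n : Type*} [RCLike 𝕜] [Fintype n]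
    [DecidableEq n] {A : Matrix n n 𝕜} (hA : IsUnit A) (x : EuclideanSpace 𝕜 n) :
    A⁻¹.toEuclideanLin (A.toEuclideanLin x) = x := by
  simp [Matrix.toLpLin_apply, Matrix.mulVec_mulVec,
    Matrix.nonsing_inv_mul _ ((Matrix.isUnit_iff_isUnit_det A).mp hA)]

theorem LinearMap.IsPositive.inner_correction_nonpos {E : Type*} [NormedAddCommGroup E]
    [InnerProductSpace ℝ E] {G H : E →ₗ[ℝ] E} (hG : G.IsPositive) (hHG : ∀ z, H (G z) = z)
    {d g y : E} {a : ℝ} (ha : 0 ≤ a) (hy : 0 ≤ ⟪y, G g⟫) (hd : 0 ≤ ⟪d, g⟫) :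
    ⟪d, H ((G y - (a * ⟪g, G y⟫ / ⟪g, G g⟫) • G g) - G y)⟫ ≤ 0 := by
  have hsymm : ⟪g, G y⟫ = ⟪y, G g⟫ := by rw [← hG.isSymmetric, real_inner_comm]
  rw [sub_sub_cancel_left, map_neg, map_smul, hHG, inner_neg_right, inner_smul_right, hsymm,
    neg_nonpos]
  exact mul_nonneg (div_nonneg (mul_nonneg ha hy) (hG.inner_nonneg_right g)) hd

open scoped Classical in
theorem proj_correction_trace_nonpos_general {N m : ℕ}
    (f : Fin m → (EuclideanSpace ℝ (Fin N) → ℝ))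
    (hf : ∀ j, ConvexOn ℝ Set.univ (f j)) (hf1 : ∀ j, ContDiff ℝ 1 (f j))
    (Γ : Matrix (Fin N) (Fin N) ℝ) (hΓpd : Γ.PosDef)
    (θ θs Y : Fin m → EuclideanSpace ℝ (Fin N))
    (hθs : ∀ j, f j (θs j) ≤ 0) :
    let G := Matrix.toEuclideanLin Γ
    let g := fun j => gradient (f j) (θ j)
    let Proj := fun j =>
      if 0 < f j (θ j) ∧ 0 < ⟪Y j, G (g j)⟫ then
        G (Y j) - (f j (θ j) * ⟪g j, G (Y j)⟫ / ⟪g j, G (g j)⟫) • G (g j)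
      else G (Y j)
    ∑ j, ⟪θ j - θs j, Matrix.toEuclideanLin Γ⁻¹ (Proj j - G (Y j))⟫ ≤ 0 := by
  intro G g Proj
  have hG : G.IsPositive := Matrix.isPositive_toEuclideanLin_iff.mpr hΓpd.posSemidef
  have hinv := Matrix.toEuclideanLin_inv_apply_toEuclideanLin hΓpd.isUnit
  refine Finset.sum_nonpos fun j _ => ?_
  by_cases hc : 0 < f j (θ j) ∧ 0 < ⟪Y j, G (g j)⟫
  · have hdescent : 0 ≤ ⟪θ j - θs j, g j⟫ :=
      (hf j).inner_sub_gradient_nonneg ((hf1 j).differentiable one_ne_zero _)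
        ((hθs j).trans hc.1.le)
    simp only [Proj, if_pos hc]
    exact hG.inner_correction_nonpos hinv hc.1.le hc.2.le hdescent
  · simp only [Proj, if_neg hc, sub_self, map_zero, inner_zero_right, le_refl]

open scoped Classical in
/-- Lemma 4: columnwise Γ-projection correction has nonpositive trace inner product
with the parameter error. -/
theorem proj_correction_trace_nonpos {N m : ℕ}
    (f : Fin m → (EuclideanSpace ℝ (Fin N) → ℝ))
    (hf : ∀ j, ConvexOn ℝ Set.univ (f j)) (hf1 : ∀ j, ContDiff ℝ 1 (f j))
    (Γ : Matrix (Fin N) (Fin N) ℝ) (hΓsym : Γ.IsSymm) (hΓpd : Γ.PosDef)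
    (θ θs Y : Fin m → EuclideanSpace ℝ (Fin N))
    (hθs : ∀ j, f j (θs j) ≤ 0) :
    let G := Matrix.toEuclideanLin Γ
    let g := fun j => gradient (f j) (θ j)
    let Proj := fun j =>
      if 0 < f j (θ j) ∧ 0 < ⟪Y j, G (g j)⟫ then
        G (Y j) - (f j (θ j) * ⟪g j, G (Y j)⟫ / ⟪g j, G (g j)⟫) • G (g j)
      else G (Y j)
    ∑ j, ⟪θ j - θs j, Matrix.toEuclideanLin Γ⁻¹ (Proj j - G (Y j))⟫ ≤ 0 :=
  proj_correction_trace_nonpos_general f hf hf1 Γ hΓpd θ θs Y hθs
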